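/- Let α > 1. There exist constants c, C > 0 depending only on α such that for every a : ℤ² → ℂ with a(0) = 0 one has, with all quantities valued in [0,∞]: c·∑_{m∈ℤ²∖{0}} |m|^{−2(α+1)}|a(m)|² ≤ ∑_{k∈ℤ²∖{0}} |k|^{−2α} ( ∑_{ℓ∈ℤ²∖{0}, ℓ≠k} |ℓ|^{−2(α+1)} (1 − |k|²/|ℓ−k|²)² |a(ℓ−k)|² ) ≤ C·∑_{m∈ℤ²∖{0}} |m|^{−2(α+1)}|a(m)|². -/

import Mathlib

/-!
Substituting `ℓ = m + k` and exchanging the sums turns the middle quantity into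
`∑_{m ≠ 0} V(m) |a m|²` with `V(m) = ∑_{k ≠ 0, -m} |k|^{-2α} |m+k|^{-2(α+1)} (1 - |k|²/|m|²)²`,
so it suffices to show `V(m) ≍ |m|^{-2(α+1)}`. For the lower bound a single term suffices: some
`k` with `|k|² ≤ 4` keeps `|1 - |k|²/|m|²| ≥ 1/2`. For the upper bound,
`||m|² - |k|²| = |⟨m+k, m-k⟩| ≤ |m+k| |m-k|` and `|m| ≤ |k| + |m+k|` bound each term by
`4^{α+1} |m|^{-2(α+1)} (|k|^{-2α} + |m+k|^{-2α})`, and the sum of the bracket over `k` is twice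
the Epstein zeta value `∑_{k ≠ 0} |k|^{-2α}`, finite for `α > 1`.
-/

open scoped ENNReal

/-- Squared Euclidean norm of a lattice point `k ∈ ℤ²`. -/
noncomputable def nsq (k : ℤ × ℤ) : ℝ := (k.1 : ℝ) ^ 2 + (k.2 : ℝ) ^ 2

lemma ENNReal.mul_tsum_ite_mul_le {ι : Type*} {p : ι → Prop} [DecidablePred p]
    {u v b : ι → ℝ≥0∞} {c d : ℝ≥0∞} (h : ∀ i, p i → c * u i ≤ d * v i) :
    c * ∑' i, (if p i then u i * b i else 0) ≤ d * ∑' i, (if p i then v i * b i else 0) := by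
  rw [← ENNReal.tsum_mul_left, ← ENNReal.tsum_mul_left]
  refine ENNReal.tsum_le_tsum fun i => ?_
  split_ifs with hi
  · simpa only [mul_assoc] using mul_le_mul_left (h i hi) (b i)
  · simp

lemma nsq_zero : nsq 0 = 0 := by simp [nsq]

lemma nsq_nonneg (m : ℤ × ℤ) : 0 ≤ nsq m := by unfold nsq; positivity

lemma one_le_nsq {m : ℤ × ℤ} (hm : m ≠ 0) : 1 ≤ nsq m := by
  obtain ⟨a, b⟩ := m
  have hab : a ≠ 0 ∨ b ≠ 0 := by
    contrapose! hm
    simp [hm]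
  have : (1 : ℤ) ≤ a ^ 2 + b ^ 2 := by
    rcases hab with h | h
    · nlinarith [Int.one_le_abs h, sq_abs a, sq_nonneg b]
    · nlinarith [Int.one_le_abs h, sq_abs b, sq_nonneg a]
  unfold nsq
  exact_mod_cast this

lemma nsq_rpow_nonneg (m : ℤ × ℤ) (s : ℝ) : 0 ≤ nsq m ^ s := Real.rpow_nonneg (nsq_nonneg m) s

lemma nsq_pos {m : ℤ × ℤ} (hm : m ≠ 0) : 0 < nsq m := one_pos.trans_le (one_le_nsq hm)

lemma nsq_add_le (m k : ℤ × ℤ) : nsq (m + k) ≤ 2 * nsq m + 2 * nsq k := by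
  simp only [nsq, Prod.fst_add, Prod.snd_add, Int.cast_add]
  nlinarith [sq_nonneg ((m.1 : ℝ) - k.1), sq_nonneg ((m.2 : ℝ) - k.2)]

lemma nsq_sub_le (m k : ℤ × ℤ) : nsq (m - k) ≤ 2 * nsq m + 2 * nsq k := by
  simp only [nsq, Prod.fst_sub, Prod.snd_sub, Int.cast_sub]
  nlinarith [sq_nonneg ((m.1 : ℝ) + k.1), sq_nonneg ((m.2 : ℝ) + k.2)]

lemma sq_nsq_sub_nsq_le (m k : ℤ × ℤ) : (nsq m - nsq k) ^ 2 ≤ nsq (m + k) * nsq (m - k) := by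
  simp only [nsq, Prod.fst_add, Prod.snd_add, Prod.fst_sub, Prod.snd_sub, Int.cast_add,
    Int.cast_sub]
  nlinarith [sq_nonneg (((m.1 : ℝ) + k.1) * (m.2 - k.2) - (m.2 + k.2) * (m.1 - k.1))]

lemma Real.rpow_neg_le_mul_rpow_neg {s w z c : ℝ} (hs : 0 ≤ s) (hz : 0 < z) (hc : 0 < c)
    (hzw : z ≤ c * w) : w ^ (-s) ≤ c ^ s * z ^ (-s) := calc
  w ^ (-s) ≤ (z / c) ^ (-s) :=
    Real.rpow_le_rpow_of_nonpos (by positivity) ((div_le_iff₀' hc).2 hzw) (by linarith)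
  _ = c ^ s * z ^ (-s) := by
    rw [Real.div_rpow hz.le hc.le, Real.rpow_neg hc.le, div_inv_eq_mul, mul_comm]

/-- `x = |k|², y = |m + k|², z = |m|²`; the case `z ≤ x` is where `1 ≤ α` enters. -/
lemma cancellation_le {α x y z : ℝ} (hα : 1 ≤ α) (hx : 0 < x) (hy : 0 < y) (hz : 0 < z)
    (hz_le : z ≤ 2 * y + 2 * x) (hsq : (z - x) ^ 2 ≤ y * (2 * z + 2 * x)) :
    x ^ (-α) * y ^ (-(α + 1)) * (1 - x / z) ^ 2 ≤
      4 ^ (α + 1) * z ^ (-(α + 1)) * (x ^ (-α) + y ^ (-α)) := by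
  set X := x ^ (-α)
  set Y := y ^ (-α)
  set Z := z ^ (-α)
  have hX : 0 < X := by positivity
  have hY : 0 < Y := by positivity
  have hZ : 0 < Z := by positivity
  have hF : 1 ≤ (4 : ℝ) ^ α := Real.one_le_rpow (by norm_num) (by linarith)
  rw [neg_add, Real.rpow_add hy, Real.rpow_add hz, Real.rpow_neg_one, Real.rpow_neg_one,
    Real.rpow_add_one (by norm_num)]
  have hfac : (1 - x / z) ^ 2 = (z - x) ^ 2 / z ^ 2 := by field_simp
  rw [hfac]
  have hmain : X * (Y * y⁻¹) * ((z - x) ^ 2 / z ^ 2) ≤ 4 * X * Y * max x z / z ^ 2 := by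
    have : (z - x) ^ 2 ≤ y * (4 * max x z) := hsq.trans (by gcongr; grind)
    calc X * (Y * y⁻¹) * ((z - x) ^ 2 / z ^ 2)
        ≤ X * (Y * y⁻¹) * (y * (4 * max x z) / z ^ 2) := by gcongr
      _ = 4 * X * Y * max x z / z ^ 2 := by field_simp
  refine hmain.trans ?_
  rcases le_total x z with hxz | hzx
  · rw [max_eq_right hxz]
    rcases le_total z (4 * y) with hzy | hyz
    · have : Y ≤ 4 ^ α * Z := Real.rpow_neg_le_mul_rpow_neg (by linarith) hz (by norm_num) hzy
      field_simp
      nlinarith [mul_pos hX hY, mul_pos hX hZ, mul_pos hY hZ]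
    · have hzx : z ≤ 4 * x := by linarith
      have : X ≤ 4 ^ α * Z := Real.rpow_neg_le_mul_rpow_neg (by linarith) hz (by norm_num) hzx
      field_simp
      nlinarith [mul_pos hX hY, mul_pos hX hZ, mul_pos hY hZ]
  · rw [max_eq_left hzx]
    have : X * x ≤ Z * z := by
      simp only [X, Z, ← Real.rpow_add_one hx.ne', ← Real.rpow_add_one hz.ne']
      exact Real.rpow_le_rpow_of_nonpos hz hzx (by linarith)
    field_simp
    nlinarith [mul_le_mul_of_nonneg_left this hY.le,
      mul_nonneg (sub_nonneg.2 hF) (mul_pos (mul_pos hz hZ) (add_pos hX hY)).le,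
      mul_pos (mul_pos hz hZ) hX]

lemma summable_nsq_rpow_neg {s : ℝ} (hs : 1 < s) : Summable fun k : ℤ × ℤ => nsq k ^ (-s) := by
  have hnorm := (finTwoArrowEquiv ℤ).symm.summable_iff.2
    (EisensteinSeries.summable_one_div_norm_rpow (k := 2 * s) (by linarith))
  refine hnorm.of_nonneg_of_le (fun k => nsq_rpow_nonneg k _) fun k => ?_
  rcases eq_or_ne k 0 with rfl | hk
  · rw [Function.comp_apply, nsq_zero, Real.zero_rpow (by linarith)]
    positivity
  set v := (finTwoArrowEquiv ℤ).symm k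
  have hv : 0 < ‖v‖ :=
    norm_pos_iff.2 ((finTwoArrowEquiv ℤ).symm.injective.ne hk |>.trans_eq (by simp))
  have hv_le : ‖v‖ ≤ √(nsq k) := by
    refine (pi_norm_le_iff_of_nonneg (Real.sqrt_nonneg _)).2 fun i => ?_
    fin_cases i <;> simp only [v, nsq, Int.norm_eq_abs] <;> apply Real.abs_le_sqrt <;>
      simp [sq_nonneg]
  calc nsq k ^ (-s) = √(nsq k) ^ (-(2 * s)) := by
        rw [Real.sqrt_eq_rpow, ← Real.rpow_mul (nsq_nonneg k)]; ring_nf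
    _ ≤ ‖v‖ ^ (-(2 * s)) := Real.rpow_le_rpow_of_nonpos hv hv_le (by linarith)

/-- The `k = 0` term is `0 ^ (-s) = 0`. -/
noncomputable def latticeZeta (s : ℝ) : ℝ := ∑' k : ℤ × ℤ, nsq k ^ (-s)

lemma latticeZeta_pos {s : ℝ} (hs : 1 < s) : 0 < latticeZeta s :=
  (summable_nsq_rpow_neg hs).tsum_pos (fun k => nsq_rpow_nonneg k _) (1, 0)
    (by norm_num [nsq])

lemma exists_small_shift {m : ℤ × ℤ} (hm : m ≠ 0) :
    ∃ k : ℤ × ℤ, k ≠ 0 ∧ m + k ≠ 0 ∧ nsq k ≤ 4 ∧ 1 / 4 ≤ (1 - nsq k / nsq m) ^ 2 := by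
  have hm1 := one_le_nsq hm
  rcases le_or_gt 2 (nsq m) with h2 | h2
  · refine ⟨(1, 0), by simp, fun h => ?_, by norm_num [nsq], ?_⟩
    · rw [add_eq_zero_iff_eq_neg.1 h] at h2
      norm_num [nsq] at h2
    · have : 1 / nsq m ≤ 1 / 2 := by rw [div_le_div_iff₀] <;> linarith
      rw [show nsq (1, 0) = 1 by norm_num [nsq]]
      nlinarith
  · refine ⟨(2, 0), by simp, fun h => ?_, by norm_num [nsq], ?_⟩
    · rw [add_eq_zero_iff_eq_neg.1 h] at h2
      norm_num [nsq] at h2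
    · have : 2 ≤ 4 / nsq m := by rw [le_div_iff₀] <;> linarith
      rw [show nsq (2, 0) = 4 by norm_num [nsq]]
      nlinarith

/-- Substituting `ℓ = m + k`, `|a m|²` enters the middle sum of the theorem with this weight. -/
noncomputable def cancellationMultiplier (α : ℝ) (m : ℤ × ℤ) : ℝ≥0∞ :=
  ∑' k : ℤ × ℤ, if k ≠ 0 ∧ m + k ≠ 0 then
    ENNReal.ofReal (nsq k ^ (-α) * nsq (m + k) ^ (-(α + 1)) * (1 - nsq k / nsq m) ^ 2) else 0

lemma le_cancellationMultiplier {α : ℝ} (hα : 0 ≤ α) {m : ℤ × ℤ} (hm : m ≠ 0) :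
    ENNReal.ofReal (4 ^ (-α) * 10 ^ (-(α + 1)) / 4) * ENNReal.ofReal (nsq m ^ (-(α + 1))) ≤
      cancellationMultiplier α m := by
  obtain ⟨k, hk, hmk, hk4, hfac⟩ := exists_small_shift hm
  refine le_trans ?_ (ENNReal.le_tsum k)
  rw [if_pos ⟨hk, hmk⟩, ← ENNReal.ofReal_mul (by positivity)]
  refine ENNReal.ofReal_le_ofReal ?_
  have hm1 := one_le_nsq hm
  have hmk10 : nsq (m + k) ≤ 10 * nsq m := by linarith [nsq_add_le m k]
  have hk_rpow : 4 ^ (-α) ≤ nsq k ^ (-α) :=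
    Real.rpow_le_rpow_of_nonpos (nsq_pos hk) hk4 (by linarith)
  have hmk_rpow : (10 * nsq m) ^ (-(α + 1)) ≤ nsq (m + k) ^ (-(α + 1)) :=
    Real.rpow_le_rpow_of_nonpos (nsq_pos hmk) hmk10 (by linarith)
  calc 4 ^ (-α) * 10 ^ (-(α + 1)) / 4 * nsq m ^ (-(α + 1))
      = 4 ^ (-α) * (10 * nsq m) ^ (-(α + 1)) * (1 / 4) := by
        rw [Real.mul_rpow (by norm_num) (by linarith)]; ring
    _ ≤ nsq k ^ (-α) * nsq (m + k) ^ (-(α + 1)) * (1 - nsq k / nsq m) ^ 2 := by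
        have := nsq_rpow_nonneg k (-α)
        have := nsq_rpow_nonneg (m + k) (-(α + 1))
        gcongr ?_ * ?_ * ?_

lemma cancellationMultiplier_le {α : ℝ} (hα : 1 < α) {m : ℤ × ℤ} (hm : m ≠ 0) :
    cancellationMultiplier α m ≤
      ENNReal.ofReal (2 * 4 ^ (α + 1) * latticeZeta α) * ENNReal.ofReal (nsq m ^ (-(α + 1))) := by
  set D := ENNReal.ofReal (4 ^ (α + 1) * nsq m ^ (-(α + 1))) with hD
  have hterm (k : ℤ × ℤ) : (if k ≠ 0 ∧ m + k ≠ 0 then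
      ENNReal.ofReal (nsq k ^ (-α) * nsq (m + k) ^ (-(α + 1)) * (1 - nsq k / nsq m) ^ 2)
      else 0) ≤ D * (ENNReal.ofReal (nsq k ^ (-α)) + ENNReal.ofReal (nsq (m + k) ^ (-α))) := by
    split_ifs with h
    · obtain ⟨hk, hmk⟩ := h
      rw [← ENNReal.ofReal_add (nsq_rpow_nonneg _ _) (nsq_rpow_nonneg _ _),
        ← ENNReal.ofReal_mul (mul_nonneg (by positivity) (nsq_rpow_nonneg _ _))]
      refine ENNReal.ofReal_le_ofReal ?_
      refine cancellation_le hα.le (nsq_pos hk) (nsq_pos hmk) (nsq_pos hm) ?_ ?_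
      · simpa using nsq_sub_le (m + k) k
      · nlinarith [sq_nsq_sub_nsq_le m k, nsq_sub_le m k, nsq_nonneg (m + k)]
    · exact zero_le
  have hzeta : ∑' k : ℤ × ℤ, ENNReal.ofReal (nsq k ^ (-α)) = ENNReal.ofReal (latticeZeta α) :=
    (ENNReal.ofReal_tsum_of_nonneg (fun k => nsq_rpow_nonneg k _) (summable_nsq_rpow_neg hα)).symm
  have hshift :
      ∑' k : ℤ × ℤ, ENNReal.ofReal (nsq (m + k) ^ (-α)) = ENNReal.ofReal (latticeZeta α) :=
    ((Equiv.addLeft m).tsum_eq fun k => ENNReal.ofReal (nsq k ^ (-α))).trans hzeta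
  calc cancellationMultiplier α m
      ≤ ∑' k, D * (ENNReal.ofReal (nsq k ^ (-α)) + ENNReal.ofReal (nsq (m + k) ^ (-α))) :=
        ENNReal.tsum_le_tsum hterm
    _ = D * (2 * ENNReal.ofReal (latticeZeta α)) := by
        rw [ENNReal.tsum_mul_left, ENNReal.tsum_add, hzeta, hshift, two_mul]
    _ = _ := by
        rw [hD, ENNReal.ofReal_mul (by positivity), ENNReal.ofReal_mul (by positivity),
          ENNReal.ofReal_mul (by positivity), ENNReal.ofReal_ofNat]
        ring

lemma tsum_cancellation_eq_tsum_multiplier (α : ℝ) (a : ℤ × ℤ → ℂ) :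
    (∑' k : ℤ × ℤ,
        (if k ≠ 0 then
          ENNReal.ofReal ((nsq k) ^ (-α)) *
            ∑' ℓ : ℤ × ℤ,
              (if ℓ ≠ 0 ∧ ℓ ≠ k then
                ENNReal.ofReal
                  ((nsq ℓ) ^ (-(α + 1)) * (1 - nsq k / nsq (ℓ - k)) ^ 2 * ‖a (ℓ - k)‖ ^ 2)
              else 0)
        else 0)) =
      ∑' m : ℤ × ℤ,
        if m ≠ 0 then cancellationMultiplier α m * ENNReal.ofReal (‖a m‖ ^ 2) else 0 := by
  calc _ = ∑' (k : ℤ × ℤ) (m : ℤ × ℤ), if k ≠ 0 ∧ m + k ≠ 0 ∧ m ≠ 0 then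
        ENNReal.ofReal (nsq k ^ (-α) * nsq (m + k) ^ (-(α + 1)) * (1 - nsq k / nsq m) ^ 2) *
          ENNReal.ofReal (‖a m‖ ^ 2) else 0 := by
        refine tsum_congr fun k => ?_
        rw [← (Equiv.addRight k).tsum_eq]
        split_ifs with hk
        · rw [← ENNReal.tsum_mul_left]
          refine tsum_congr fun m => ?_
          simp only [Equiv.coe_addRight, add_sub_cancel_right, ne_eq, add_eq_right, hk,
            not_false_eq_true, true_and]
          split_ifs
          · simp only [ENNReal.ofReal_mul', nsq_rpow_nonneg, sq_nonneg]
            ring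
          · simp
        · simp [not_not.1 hk]
    _ = _ := by
        rw [ENNReal.tsum_comm]
        refine tsum_congr fun m => ?_
        split_ifs with hm
        · rw [cancellationMultiplier, ← ENNReal.tsum_mul_right]
          refine tsum_congr fun k => ?_
          simp only [hm, ne_eq, not_false_eq_true, and_true]
          split_ifs <;> simp
        · simp [hm]

/-- Norm equivalence with the linearised Navier–Stokes cancellation (Lemma 5.5): for `α > 1`
there are `c, C > 0` such that for all Fourier data `a : ℤ² → ℂ` with `a 0 = 0`, with all
sums valued in `[0,∞]`,
`c ∑_{m≠0} |m|^{−2(α+1)}|a m|² ≤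
   ∑_{k≠0} |k|^{−2α} ∑_{ℓ≠0, ℓ≠k} |ℓ|^{−2(α+1)} (1 − |k|²/|ℓ−k|²)² |a(ℓ−k)|²
  ≤ C ∑_{m≠0} |m|^{−2(α+1)}|a m|²`. -/
theorem norm_equivalence_linearised_NS (α : ℝ) (hα : 1 < α) :
    ∃ c C : ℝ, 0 < c ∧ 0 < C ∧ ∀ a : ℤ × ℤ → ℂ, a 0 = 0 →
      (ENNReal.ofReal c *
          (∑' m : ℤ × ℤ, if m ≠ 0 then ENNReal.ofReal ((nsq m) ^ (-(α + 1)) * ‖a m‖ ^ 2) else 0) ≤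
        ∑' k : ℤ × ℤ,
          (if k ≠ 0 then
            ENNReal.ofReal ((nsq k) ^ (-α)) *
              ∑' ℓ : ℤ × ℤ,
                (if ℓ ≠ 0 ∧ ℓ ≠ k then
                  ENNReal.ofReal
                    ((nsq ℓ) ^ (-(α + 1)) * (1 - nsq k / nsq (ℓ - k)) ^ 2 * ‖a (ℓ - k)‖ ^ 2)
                else 0)
          else 0)) ∧
      ((∑' k : ℤ × ℤ,
          (if k ≠ 0 then
            ENNReal.ofReal ((nsq k) ^ (-α)) *
              ∑' ℓ : ℤ × ℤ,
                (if ℓ ≠ 0 ∧ ℓ ≠ k then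
                  ENNReal.ofReal
                    ((nsq ℓ) ^ (-(α + 1)) * (1 - nsq k / nsq (ℓ - k)) ^ 2 * ‖a (ℓ - k)‖ ^ 2)
                else 0)
          else 0)) ≤
        ENNReal.ofReal C *
          ∑' m : ℤ × ℤ, if m ≠ 0 then ENNReal.ofReal ((nsq m) ^ (-(α + 1)) * ‖a m‖ ^ 2) else 0) := by
  refine ⟨4 ^ (-α) * 10 ^ (-(α + 1)) / 4, 2 * 4 ^ (α + 1) * latticeZeta α, by positivity,
    mul_pos (by positivity) (latticeZeta_pos hα), fun a _ => ?_⟩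
  rw [tsum_cancellation_eq_tsum_multiplier]
  simp only [ENNReal.ofReal_mul (nsq_rpow_nonneg _ _)]
  constructor
  · simpa only [one_mul] using ENNReal.mul_tsum_ite_mul_le
      (b := fun m => ENNReal.ofReal (‖a m‖ ^ 2)) (d := 1) fun m (hm : m ≠ 0) =>
        (le_cancellationMultiplier (by linarith) hm).trans_eq (one_mul _).symm
  · simpa only [one_mul] using ENNReal.mul_tsum_ite_mul_le
      (b := fun m => ENNReal.ofReal (‖a m‖ ^ 2)) (c := 1) fun m (hm : m ≠ 0) =>
        (one_mul _).trans_le (cancellationMultiplier_le hα hm)
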